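/- Let (B, 𝓑) be a measurable space, P and Q probability measures on B, and 𝓑ⁿ ⊆ 𝓑 a sequence of sub-σ-fields. Suppose that Q restricted to 𝓑ⁿ is absolutely continuous with respect to P restricted to 𝓑ⁿ, with density R_n = dQ/dP|_{𝓑ⁿ}. Then liminf_{n→∞} (1/n) log R_n ≥ 0 holds Q-almost everywhere. -/

import Mathlib

open MeasureTheory Filter

lemma liminf_nonneg_of_eventually (u : ℕ → ℝ)
    (h : ∀ ε : ℝ, 0 < ε → ∀ᶠ n in atTop, -ε ≤ u n) :
    0 ≤ atTop.liminf u := by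
  rw [Filter.liminf_eq]
  by_cases hb : BddAbove {a | ∀ᶠ n in atTop, a ≤ u n}
  · apply le_of_forall_pos_le_add
    intro ε hε
    have h1 : -ε ≤ sSup {a | ∀ᶠ n in atTop, a ≤ u n} := le_csSup hb (h ε hε)
    linarith
  · rw [Real.sSup_of_not_bddAbove hb]

lemma key_lemma {B : Type*} [mB : MeasurableSpace B]
    (P Q : Measure B) [IsProbabilityMeasure P] [IsProbabilityMeasure Q]
    (m : ℕ → MeasurableSpace B) (hm : ∀ n, m n ≤ mB)
    (R : ℕ → B → ℝ)
    (hRmeas : ∀ n, Measurable[m n] (R n))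
    (hdens : ∀ n, ∀ A : Set B, MeasurableSet[m n] A →
      ∫ x in A, R n x ∂P = (Q A).toReal)
    (ε : ℝ) (hε : 0 < ε) :
    ∀ᵐ x ∂Q, ∀ᶠ n : ℕ in atTop, -ε ≤ (n : ℝ)⁻¹ * Real.log (R n x) := by
  set A : ℕ → Set B := fun n => {x | R n x < Real.exp ((n : ℝ) * (-ε))} with hA_def
  have hA : ∀ n, MeasurableSet[m n] (A n) := fun n =>
    measurableSet_lt (hRmeas n) measurable_const
  have hQA : ∀ n, Q (A n) ≤ ENNReal.ofReal (Real.exp (-ε) ^ n) := by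
    intro n
    have h1 : (Q (A n)).toReal = ∫ x in A n, R n x ∂P := (hdens n _ (hA n)).symm
    have h2 : ∫ x in A n, R n x ∂P ≤ Real.exp ((n : ℝ) * (-ε)) := by
      by_cases hi : IntegrableOn (R n) (A n) P
      · calc ∫ x in A n, R n x ∂P
            ≤ ∫ _x in A n, Real.exp ((n : ℝ) * (-ε)) ∂P := by
              apply setIntegral_mono_on hi (integrableOn_const (measure_ne_top _ _))
                (hm n _ (hA n))
              intro x hx
              exact le_of_lt hx
          _ = (P (A n)).toReal * Real.exp ((n : ℝ) * (-ε)) := by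
              rw [setIntegral_const, smul_eq_mul]; rfl
          _ ≤ 1 * Real.exp ((n : ℝ) * (-ε)) := by
              apply mul_le_mul_of_nonneg_right _ (Real.exp_pos _).le
              exact ENNReal.toReal_le_of_le_ofReal one_pos.le (by simp [prob_le_one])
          _ = Real.exp ((n : ℝ) * (-ε)) := one_mul _
      · rw [MeasureTheory.integral_undef hi]
        exact (Real.exp_pos _).le
    have h3 : (Q (A n)).toReal ≤ Real.exp (-ε) ^ n := by
      rw [h1]
      rw [← Real.exp_nat_mul]
      exact h2
    calc Q (A n) = ENNReal.ofReal (Q (A n)).toReal :=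
          (ENNReal.ofReal_toReal (measure_ne_top _ _)).symm
      _ ≤ ENNReal.ofReal (Real.exp (-ε) ^ n) := ENNReal.ofReal_le_ofReal h3
  have hsum : (∑' n, Q (A n)) ≠ ⊤ := by
    have hr : Real.exp (-ε) < 1 := Real.exp_lt_one_iff.2 (by linarith)
    have hrs : Summable (fun n => Real.exp (-ε) ^ n) :=
      summable_geometric_of_lt_one (Real.exp_pos _).le hr
    have hle : (∑' n, Q (A n)) ≤ ∑' n, ENNReal.ofReal (Real.exp (-ε) ^ n) :=
      ENNReal.tsum_le_tsum hQA
    have heq : (∑' n, ENNReal.ofReal (Real.exp (-ε) ^ n))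
        = ENNReal.ofReal (∑' n, Real.exp (-ε) ^ n) :=
      (ENNReal.ofReal_tsum_of_nonneg (fun n => pow_nonneg (Real.exp_pos _).le n) hrs).symm
    rw [heq] at hle
    exact ne_top_of_le_ne_top ENNReal.ofReal_ne_top hle
  have hBC : ∀ᵐ x ∂Q, ∀ᶠ n in atTop, x ∉ A n :=
    MeasureTheory.ae_eventually_notMem hsum
  filter_upwards [hBC] with x hx
  filter_upwards [hx, Filter.eventually_ge_atTop 1] with n hn hn1
  have hRe : Real.exp ((n : ℝ) * (-ε)) ≤ R n x := not_lt.mp hn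
  have hpos : 0 < R n x := lt_of_lt_of_le (Real.exp_pos _) hRe
  have hlog : (n : ℝ) * (-ε) ≤ Real.log (R n x) :=
    (Real.le_log_iff_exp_le hpos).2 hRe
  have hnR : (0 : ℝ) < (n : ℝ) := by exact_mod_cast hn1
  calc -ε = (n : ℝ)⁻¹ * ((n : ℝ) * (-ε)) := by field_simp
    _ ≤ (n : ℝ)⁻¹ * Real.log (R n x) :=
        mul_le_mul_of_nonneg_left hlog (inv_nonneg.2 hnR.le)

/-- Bahadur–Raghavachari: if `R n` is the density of `Q` w.r.t. `P` on a sub-σ-field `m n`,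
then `liminf (1/n) log R n ≥ 0` holds `Q`-a.e. -/
theorem stmt3 {B : Type*} [mB : MeasurableSpace B]
    (P Q : Measure B) [IsProbabilityMeasure P] [IsProbabilityMeasure Q]
    (m : ℕ → MeasurableSpace B) (hm : ∀ n, m n ≤ mB)
    (R : ℕ → B → ℝ)
    (hRmeas : ∀ n, Measurable[m n] (R n))
    (hRnonneg : ∀ n x, 0 ≤ R n x)
    (hdens : ∀ n, ∀ A : Set B, MeasurableSet[m n] A →
      ∫ x in A, R n x ∂P = (Q A).toReal) :
    ∀ᵐ x ∂Q, 0 ≤ atTop.liminf (fun n : ℕ => (n : ℝ)⁻¹ * Real.log (R n x)) := by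
  have key : ∀ k : ℕ, ∀ᵐ x ∂Q, ∀ᶠ n : ℕ in atTop,
      -(1 / ((k : ℝ) + 1)) ≤ (n : ℝ)⁻¹ * Real.log (R n x) := fun k =>
    key_lemma P Q m hm R hRmeas hdens _ (by positivity)
  have hall := ae_all_iff.2 key
  filter_upwards [hall] with x hx
  apply liminf_nonneg_of_eventually
  intro ε hε
  obtain ⟨k, hk⟩ := exists_nat_one_div_lt hε
  filter_upwards [hx k] with n hn
  have : -(ε) ≤ -(1 / ((k : ℝ) + 1)) := by
    have : (1 : ℝ) / (k + 1) < ε := hk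
    linarith
  linarith
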